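/- Let K be a field, 1 ≤ k < m, and let I, J ⊆ {1,…,m} with |I| = |J| = k. Let P := K[x_{ij} : (i,j) ∈ S_{I,J}] be the polynomial ring in the k(2m−k) variables indexed by S_{I,J} = {(i,j) : i ∈ I or j ∈ J}, regarded as a subring of R = K[x_{ij} : 1 ≤ i,j ≤ m]; note that the minor Δ_{I,J} lies in P. Then the composite K-algebra homomorphism P ↪ R → R_k = R/I_{k+1} induces an isomorphism from the localization of P at Δ_{I,J} onto the localization of R_k at the image of Δ_{I,J}. (In particular, the open set D(Δ_{I,J}) of the determinantal variety D^k = Spec R_k is smooth, and these open sets cover the complement of V(I_k), the smooth locus of D^k.) -/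

import Mathlib

open MvPolynomial

/-- The `r × r` minor `Δ_{A,B}` of the generic `m × m` matrix `(x_{ij})`. -/
noncomputable def genMinor (K : Type*) [Field K] (m r : ℕ) (A B : Finset (Fin m))
    (hA : A.card = r) (hB : B.card = r) : MvPolynomial (Fin m × Fin m) K :=
  (Matrix.of fun a b : Fin r =>
    (X ((↑(A.orderIsoOfFin hA a) : Fin m), (↑(B.orderIsoOfFin hB b) : Fin m)) :
      MvPolynomial (Fin m × Fin m) K)).det

/-- The determinantal ideal `I_r`, generated by all `r × r` minors of the generic matrix. -/
noncomputable def detIdeal (K : Type*) [Field K] (m r : ℕ) :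
    Ideal (MvPolynomial (Fin m × Fin m) K) :=
  Ideal.span {p | ∃ (A B : Finset (Fin m)) (hA : A.card = r) (hB : B.card = r),
    p = genMinor K m r A B hA hB}

/-- The determinantal ring `R_k = R / I_{k+1}`. -/
noncomputable abbrev DetRing (K : Type*) [Field K] (m k : ℕ) :=
  MvPolynomial (Fin m × Fin m) K ⧸ detIdeal K m (k + 1)

/-- The index set `S_{I,J} = {(i,j) : i ∈ I or j ∈ J}`, as a type. -/
def SIJ (m : ℕ) (I J : Finset (Fin m)) : Type :=
  {p : Fin m × Fin m // p.1 ∈ I ∨ p.2 ∈ J}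

/-- The polynomial ring `P = K[x_{ij} : (i,j) ∈ S_{I,J}]`, mapped into `R = K[x_{ij}]` by
sending variables to variables, composed with the projection `R → R_k`. -/
noncomputable def inclHom (K : Type*) [Field K] (m k : ℕ) (I J : Finset (Fin m)) :
    MvPolynomial (SIJ m I J) K →+* DetRing K m k :=
  (Ideal.Quotient.mk (detIdeal K m (k + 1))).comp
    (MvPolynomial.rename (fun p : SIJ m I J => p.val)).toRingHom

/-- The minor `Δ_{I,J}` regarded as an element of `P = K[x_{ij} : (i,j) ∈ S_{I,J}]`
(all of its variables satisfy `i ∈ I`). -/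
noncomputable def minorP (K : Type*) [Field K] (m k : ℕ) (I J : Finset (Fin m))
    (hI : I.card = k) (hJ : J.card = k) : MvPolynomial (SIJ m I J) K :=
  (Matrix.of fun a b : Fin k =>
    (X (⟨((↑(I.orderIsoOfFin hI a) : Fin m), (↑(J.orderIsoOfFin hJ b) : Fin m)),
        Or.inl (Finset.coe_mem _)⟩ : SIJ m I J) :
      MvPolynomial (SIJ m I J) K)).det

/-!
Write `Δ = det X_{I,J}`. Over `P_Δ` the entries of the generic matrix indexed by `S_{I,J}` have a
completion of rank `≤ k`, the skeleton `M = X_{*,J} X_{I,J}⁻¹ X_{I,*}`: it factors through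
a `k`-dimensional space, so its `(k+1)`-minors vanish, and it agrees with `X` on the rows `I` and the
columns `J`. Hence `x_{ij} ↦ M_{ij}` defines a map `(R_k)_Δ → P_Δ`, which is a left inverse of the
natural map. It is also a right inverse because in `(R_k)_Δ` the generic matrix equals its own
skeleton: for `i ∉ I`, `j ∉ J` the `(k+1)`-minor on the rows `I ∪ {i}` and the columns `J ∪ {j}` is
the Schur complement expression `Δ · (x_{ij} - M_{ij})`, and it vanishes there.
-/

namespace Matrix

variable {R : Type*} [CommRing R]

theorem det_mul_eq_zero_of_card_lt {n k : Type*} [Fintype n] [DecidableEq n] [Fintype k]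
    (U : Matrix n k R) (V : Matrix k n R) (h : Fintype.card k < Fintype.card n) :
    (U * V).det = 0 := by
  obtain ⟨e⟩ : Nonempty (k ⊕ Fin (Fintype.card n - Fintype.card k) ≃ n) :=
    Fintype.card_eq.mp (by simp; omega)
  have hUV : U * V = (fromCols U 0).submatrix id e.symm * (fromRows V 0).submatrix e.symm id := by
    rw [submatrix_mul_equiv, submatrix_id_id, fromCols_mul_fromRows, Matrix.zero_mul, add_zero]
  rw [hUV, det_mul]
  refine mul_eq_zero_of_left (det_eq_zero_of_column_eq_zero (e (.inr ⟨0, by omega⟩)) fun i => ?_) _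
  simp

theorem map_nonsing_inv {S : Type*} [CommRing S] {n : Type*} [Fintype n] [DecidableEq n]
    (f : R →+* S) (A : Matrix n n R) (h : IsUnit A.det) : A⁻¹.map f = (A.map f)⁻¹ := by
  refine (inv_eq_right_inv ?_).symm
  rw [← RingHom.mapMatrix_apply, ← RingHom.mapMatrix_apply, ← map_mul, mul_nonsing_inv A h, map_one]

variable {m n k : Type*} [Fintype k] [DecidableEq k]

/-- The skeleton (CUR) decomposition `X_{*,c} X_{r,c}⁻¹ X_{r,*}` of `X` through the pivot block
`X_{r,c}`. -/
noncomputable def skeleton (X : Matrix m n R) (r : k → m) (c : k → n) : Matrix m n R :=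
  X.submatrix id c * (X.submatrix r c)⁻¹ * X.submatrix r id

theorem skeleton_congr {X X' : Matrix m n R} {r : k → m} {c : k → n}
    (hcols : ∀ i b, X i (c b) = X' i (c b)) (hrows : ∀ a j, X (r a) j = X' (r a) j) :
    X.skeleton r c = X'.skeleton r c := by
  have hB : X.submatrix id c = X'.submatrix id c := ext fun i b => hcols i b
  have hC : X.submatrix r id = X'.submatrix r id := ext fun a j => hrows a j
  have hA : X.submatrix r c = X'.submatrix r c := ext fun a b => hrows a (c b)
  rw [skeleton, skeleton, hA, hB, hC]

theorem map_skeleton {S : Type*} [CommRing S] (f : R →+* S) (X : Matrix m n R) (r : k → m)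
    (c : k → n) (h : IsUnit (X.submatrix r c).det) :
    (X.skeleton r c).map f = (X.map f).skeleton r c := by
  rw [skeleton, skeleton, Matrix.map_mul, Matrix.map_mul, map_nonsing_inv f _ h]
  rfl

theorem det_submatrix_skeleton_eq_zero {ι : Type*} [Fintype ι] [DecidableEq ι]
    (X : Matrix m n R) (r : k → m) (c : k → n) (u : ι → m) (v : ι → n)
    (hcard : Fintype.card k < Fintype.card ι) : ((X.skeleton r c).submatrix u v).det = 0 :=
  det_mul_eq_zero_of_card_lt (X.submatrix u c * (X.submatrix r c)⁻¹) (X.submatrix r v) hcard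

theorem det_submatrix_sumElim (X : Matrix m n R) (r : k → m) (c : k → n) (i : m) (j : n)
    (h : IsUnit (X.submatrix r c).det) :
    (X.submatrix (Sum.elim r fun _ : Unit => i) (Sum.elim c fun _ : Unit => j)).det =
      (X.submatrix r c).det * (X i j - X.skeleton r c i j) := by
  let := (X.submatrix r c).invertibleOfIsUnitDet h
  have hblocks : X.submatrix (Sum.elim r fun _ : Unit => i) (Sum.elim c fun _ : Unit => j) =
      fromBlocks (X.submatrix r c) (X.submatrix r fun _ : Unit => j)
        (X.submatrix (fun _ : Unit => i) c) (of fun _ _ => X i j) := by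
    ext (a | a) (b | b) <;> rfl
  rw [hblocks, det_fromBlocks₁₁, det_unique (_ : Matrix Unit Unit R), invOf_eq_nonsing_inv]
  rfl

theorem apply_eq_skeleton_of_det_submatrix_sumElim_eq_zero (X : Matrix m n R) (r : k → m)
    (c : k → n) {i : m} {j : n} (h : IsUnit (X.submatrix r c).det)
    (hminor : (X.submatrix (Sum.elim r fun _ : Unit => i) (Sum.elim c fun _ : Unit => j)).det = 0) :
    X i j = X.skeleton r c i j := by
  rwa [det_submatrix_sumElim X r c i j h, h.mul_right_eq_zero, sub_eq_zero] at hminor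

end Matrix

theorem IsLocalization.Away.map_algebraMap {R P : Type*} [CommSemiring R] [CommSemiring P]
    (S Q : Type*) [CommSemiring S] [Algebra R S] [CommSemiring Q] [Algebra P Q] (f : R →+* P)
    (r : R) [IsLocalization.Away r S] [IsLocalization.Away (f r) Q] (a : R) :
    IsLocalization.Away.map S Q f r (algebraMap R S a) = algebraMap P Q (f a) :=
  IsLocalization.map_eq _ _

theorem Finset.exists_equiv_orderEmbOfFin {α ι : Type*} [LinearOrder α] [Fintype ι] {r : ℕ}
    (u : ι → α)
    (hu : Function.Injective u) (hcard : (Finset.univ.image u).card = r) :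
    ∃ e : ι ≃ Fin r, ∀ a, (Finset.univ.image u).orderEmbOfFin hcard (e a) = u a :=
  ⟨(Equiv.ofInjective u hu).trans ((Equiv.subtypeEquivRight (by simp)).trans
    ((Finset.univ.image u).orderIsoOfFin hcard).symm.toEquiv), fun a => by
    simp [← Finset.coe_orderIsoOfFin_apply]⟩

open Matrix

theorem det_submatrix_mvPolynomialX_mem_detIdeal (K : Type*) [Field K] {m r : ℕ} {ι : Type*}
    [Fintype ι] [DecidableEq ι] (u v : ι → Fin m) (hcard : Fintype.card ι = r) :
    ((mvPolynomialX (Fin m) (Fin m) K).submatrix u v).det ∈ detIdeal K m r := by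
  by_cases hu : Function.Injective u
  swap
  · obtain ⟨a, b, hab, hne⟩ := Function.not_injective_iff.1 hu
    rw [det_zero_of_row_eq hne (by ext; simp [hab])]
    exact zero_mem _
  by_cases hv : Function.Injective v
  swap
  · obtain ⟨a, b, hab, hne⟩ := Function.not_injective_iff.1 hv
    rw [det_zero_of_column_eq hne (by simp [hab])]
    exact zero_mem _
  have hA : (Finset.univ.image u).card = r := by rwa [Finset.card_image_of_injective _ hu]
  have hB : (Finset.univ.image v).card = r := by rwa [Finset.card_image_of_injective _ hv]
  obtain ⟨e₁, he₁⟩ := Finset.exists_equiv_orderEmbOfFin u hu hA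
  obtain ⟨e₂, he₂⟩ := Finset.exists_equiv_orderEmbOfFin v hv hB
  have hsub : (mvPolynomialX (Fin m) (Fin m) K).submatrix u v =
      reindex e₁.symm e₂.symm (of fun a b =>
        (X ((Finset.univ.image u).orderEmbOfFin hA a, (Finset.univ.image v).orderEmbOfFin hB b) :
          MvPolynomial _ K)) := by
    ext a b : 1
    simp [he₁, he₂]
  rw [hsub, det_reindex]
  exact Ideal.mul_mem_left _ _ (Ideal.subset_span ⟨_, _, hA, hB, rfl⟩)

section SmoothChart

variable (K : Type*) [Field K] {m k : ℕ} (I J : Finset (Fin m))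

/-- The generic matrix with its entries outside `S_{I,J}` replaced by `0`; these entries never
enter the skeleton through the pivot block `(I, J)`. -/
noncomputable def sijMatrix : Matrix (Fin m) (Fin m) (MvPolynomial (SIJ m I J) K) :=
  of fun i j => if h : i ∈ I ∨ j ∈ J then X (⟨(i, j), h⟩ : SIJ m I J) else 0

variable {K I J} in
theorem inclHom_X {i j : Fin m} (h : i ∈ I ∨ j ∈ J) :
    inclHom K m k I J (X (⟨(i, j), h⟩ : SIJ m I J)) = Ideal.Quotient.mk _ (X (i, j)) :=
  congrArg (Ideal.Quotient.mk _) (rename_X _ _)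

variable {I J} (hI : I.card = k) (hJ : J.card = k)

theorem minorP_eq_det_submatrix : minorP K m k I J hI hJ =
    ((sijMatrix K I J).submatrix (I.orderEmbOfFin hI) (J.orderEmbOfFin hJ)).det := by
  rw [minorP]
  congr 1
  ext a b : 1
  simp [sijMatrix]

abbrev LocP := Localization.Away (minorP K m k I J hI hJ)

abbrev LocR := Localization.Away (inclHom K m k I J (minorP K m k I J hI hJ))

noncomputable def sijMatrixLocP : Matrix (Fin m) (Fin m) (LocP K hI hJ) :=
  (sijMatrix K I J).map (algebraMap _ _)

theorem isUnit_det_sijMatrixLocP :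
    IsUnit ((sijMatrixLocP K hI hJ).submatrix (I.orderEmbOfFin hI) (J.orderEmbOfFin hJ)).det := by
  rw [sijMatrixLocP, submatrix_map, ← RingHom.mapMatrix_apply, ← RingHom.map_det,
    ← minorP_eq_det_submatrix]
  exact IsLocalization.Away.algebraMap_isUnit _

noncomputable def sijCompletion : Matrix (Fin m) (Fin m) (LocP K hI hJ) :=
  (sijMatrixLocP K hI hJ).skeleton (I.orderEmbOfFin hI) (J.orderEmbOfFin hJ)

theorem sijCompletion_apply_sij (p : SIJ m I J) :
    sijCompletion K hI hJ p.1.1 p.1.2 = algebraMap (MvPolynomial (SIJ m I J) K) _ (X p) := by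
  obtain ⟨⟨i, j⟩, hp⟩ := p
  have hentry : sijMatrixLocP K hI hJ i j =
      algebraMap (MvPolynomial (SIJ m I J) K) _ (X (⟨(i, j), hp⟩ : SIJ m I J)) := by
    simp [sijMatrixLocP, sijMatrix, hp]
  rw [← hentry]
  refine (apply_eq_skeleton_of_det_submatrix_sumElim_eq_zero _ _ _
    (isUnit_det_sijMatrixLocP K hI hJ) ?_).symm
  rcases hp with hi | hj
  · obtain ⟨t, rfl⟩ : i ∈ Set.range (I.orderEmbOfFin hI) := by simpa using hi
    exact det_zero_of_row_eq (i := .inl t) (j := .inr ()) Sum.inl_ne_inr rfl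
  · obtain ⟨t, rfl⟩ : j ∈ Set.range (J.orderEmbOfFin hJ) := by simpa using hj
    exact det_zero_of_column_eq (i := .inl t) (j := .inr ()) Sum.inl_ne_inr fun _ => rfl

theorem aeval_sijCompletion_eq_zero_of_mem_detIdeal (q : MvPolynomial (Fin m × Fin m) K)
    (hq : q ∈ detIdeal K m (k + 1)) : aeval (fun p => sijCompletion K hI hJ p.1 p.2) q = 0 := by
  have hle : detIdeal K m (k + 1) ≤
      RingHom.ker (aeval fun p => sijCompletion K hI hJ p.1 p.2).toRingHom := by
    rw [detIdeal, Ideal.span_le]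
    rintro _ ⟨A, B, hA, hB, rfl⟩
    rw [SetLike.mem_coe, RingHom.mem_ker, genMinor, AlgHom.toRingHom_eq_coe, RingHom.coe_coe,
      AlgHom.map_det]
    convert det_submatrix_skeleton_eq_zero (sijMatrixLocP K hI hJ) (I.orderEmbOfFin hI)
      (J.orderEmbOfFin hJ) (A.orderEmbOfFin hA) (B.orderEmbOfFin hB) (by simp) using 2
    ext a b : 1
    simp [sijCompletion]
  exact RingHom.mem_ker.1 (hle hq)

noncomputable def detRingToLocP : DetRing K m k →+* LocP K hI hJ :=
  Ideal.Quotient.lift _ (aeval fun p => sijCompletion K hI hJ p.1 p.2).toRingHom fun q hq => by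
    exact aeval_sijCompletion_eq_zero_of_mem_detIdeal K hI hJ q hq

theorem detRingToLocP_mk_X (i j : Fin m) :
    detRingToLocP K hI hJ (Ideal.Quotient.mk _ (X (i, j))) = sijCompletion K hI hJ i j := by
  simp [detRingToLocP]

theorem detRingToLocP_comp_inclHom :
    (detRingToLocP K hI hJ).comp (inclHom K m k I J) = algebraMap _ _ := by
  apply MvPolynomial.ringHom_ext
  · intro a
    simp [inclHom, detRingToLocP, IsScalarTower.algebraMap_apply K (MvPolynomial (SIJ m I J) K)]
  · intro p
    simp [inclHom, detRingToLocP, sijCompletion_apply_sij]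

noncomputable def genericMatrixLocR : Matrix (Fin m) (Fin m) (LocR K hI hJ) :=
  (mvPolynomialX (Fin m) (Fin m) K).map
    ((algebraMap (DetRing K m k) _).comp (Ideal.Quotient.mk _))

theorem isUnit_det_genericMatrixLocR :
    IsUnit ((genericMatrixLocR K hI hJ).submatrix (I.orderEmbOfFin hI) (J.orderEmbOfFin hJ)).det := by
  have hΔ : inclHom K m k I J (minorP K m k I J hI hJ) =
      (((sijMatrix K I J).submatrix (I.orderEmbOfFin hI) (J.orderEmbOfFin hJ)).map
        (inclHom K m k I J)).det := by
    rw [minorP_eq_det_submatrix, RingHom.map_det]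
    rfl
  have hunit := IsLocalization.Away.algebraMap_isUnit (S := LocR K hI hJ)
    (inclHom K m k I J (minorP K m k I J hI hJ))
  -- rewriting `hΔ` directly would also hit the `inclHom (minorP …)` inside the type `LocR`
  rw [congrArg (algebraMap (DetRing K m k) (LocR K hI hJ)) hΔ, RingHom.map_det,
    RingHom.mapMatrix_apply] at hunit
  have hmat : (genericMatrixLocR K hI hJ).submatrix (I.orderEmbOfFin hI) (J.orderEmbOfFin hJ) =
      (((sijMatrix K I J).submatrix (I.orderEmbOfFin hI) (J.orderEmbOfFin hJ)).map
        (inclHom K m k I J)).map (algebraMap _ _) := by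
    ext a b
    simp [genericMatrixLocR, sijMatrix, inclHom_X]
  rwa [hmat]

theorem skeleton_genericMatrixLocR :
    (genericMatrixLocR K hI hJ).skeleton (I.orderEmbOfFin hI) (J.orderEmbOfFin hJ) =
      genericMatrixLocR K hI hJ := by
  ext i j : 1
  refine (apply_eq_skeleton_of_det_submatrix_sumElim_eq_zero _ _ _
    (isUnit_det_genericMatrixLocR K hI hJ) ?_).symm
  rw [genericMatrixLocR, submatrix_map, ← RingHom.mapMatrix_apply, ← RingHom.map_det,
    RingHom.comp_apply, Ideal.Quotient.eq_zero_iff_mem.2, map_zero]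
  exact det_submatrix_mvPolynomialX_mem_detIdeal K _ _ (by simp)

theorem map_sijCompletion :
    (sijCompletion K hI hJ).map (IsLocalization.Away.map (LocP K hI hJ) (LocR K hI hJ)
      (inclHom K m k I J) (minorP K m k I J hI hJ)) = genericMatrixLocR K hI hJ := by
  rw [sijCompletion, map_skeleton _ _ _ _ (isUnit_det_sijMatrixLocP K hI hJ),
    ← skeleton_genericMatrixLocR]
  apply skeleton_congr
  · intro i b
    simp [sijMatrixLocP, sijMatrix, IsLocalization.Away.map_algebraMap, genericMatrixLocR,
      inclHom_X]
  · intro a j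
    simp [sijMatrixLocP, sijMatrix, IsLocalization.Away.map_algebraMap, genericMatrixLocR,
      inclHom_X]

end SmoothChart

theorem statement12_general (K : Type*) [Field K] (m k : ℕ)
    (I J : Finset (Fin m)) (hI : I.card = k) (hJ : J.card = k) :
    Function.Bijective
      (IsLocalization.Away.map
        (Localization.Away (minorP K m k I J hI hJ))
        (Localization.Away (inclHom K m k I J (minorP K m k I J hI hJ)))
        (inclHom K m k I J) (minorP K m k I J hI hJ)) := by
  set f := IsLocalization.Away.map (LocP K hI hJ) (LocR K hI hJ) (inclHom K m k I J)
    (minorP K m k I J hI hJ)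
  have hunit : IsUnit (detRingToLocP K hI hJ (inclHom K m k I J (minorP K m k I J hI hJ))) := by
    rw [← RingHom.comp_apply, detRingToLocP_comp_inclHom]
    exact IsLocalization.Away.algebraMap_isUnit _
  let ψ : LocR K hI hJ →+* LocP K hI hJ := IsLocalization.Away.lift _ hunit
  have hψ (q : MvPolynomial (SIJ m I J) K) :
      ψ (algebraMap _ _ (inclHom K m k I J q)) = algebraMap _ _ q := by
    rw [IsLocalization.Away.lift_eq, ← RingHom.comp_apply, detRingToLocP_comp_inclHom]
  have hψf : ψ.comp f = RingHom.id _ :=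
    IsLocalization.ringHom_ext (.powers (minorP K m k I J hI hJ)) <| RingHom.ext fun q => by
      simp [f, IsLocalization.Away.map_algebraMap, hψ]
  have hfψ : f.comp ψ = RingHom.id _ := by
    refine IsLocalization.ringHom_ext (.powers (inclHom K m k I J (minorP K m k I J hI hJ))) <|
      Ideal.Quotient.ringHom_ext <| MvPolynomial.ringHom_ext (fun a => ?_) fun ⟨i, j⟩ => ?_
    · have hC : Ideal.Quotient.mk _ (C a) = inclHom K m k I J (C a) := by simp [inclHom]
      simp [hC, hψ, f, IsLocalization.Away.map_algebraMap]
    · simp only [RingHom.comp_apply, ψ, IsLocalization.Away.lift_eq, detRingToLocP_mk_X,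
        RingHom.id_apply]
      exact congrFun (congrFun (map_sijCompletion K hI hJ) i) j
  exact Function.bijective_iff_has_inverse.2 ⟨ψ, RingHom.congr_fun hψf, RingHom.congr_fun hfψ⟩

/-- the composite `P → R → R_k` induces an isomorphism from the
localization of `P` at `Δ_{I,J}` onto the localization of `R_k` at the image of
`Δ_{I,J}`. -/
theorem statement12 (K : Type*) [Field K] (m k : ℕ) (hk : 1 ≤ k) (hkm : k < m)
    (I J : Finset (Fin m)) (hI : I.card = k) (hJ : J.card = k) :
    Function.Bijective
      (IsLocalization.Away.map
        (Localization.Away (minorP K m k I J hI hJ))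
        (Localization.Away (inclHom K m k I J (minorP K m k I J hI hJ)))
        (inclHom K m k I J) (minorP K m k I J hI hJ)) :=
  statement12_general K m k I J hI hJ
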